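/- Let X be a Hahn–Banach smooth Banach space (every norm-one functional in X* has a unique norm-preserving extension to X**; equivalently every point of S(X*) is a w*-w point of continuity of the dual unit ball). If X is separable, then X* is separable. -/

import Mathlib

/-!
The weak* dual ball `B` of a separable space is compact and metrizable, so it has a countable
weak*-dense subset `D`. At a norm-one functional `φ`, weak*-to-weak continuity on `B` puts `φ`
in the weak closure of `D`, hence of the span of `D`; by Mazur's theorem the weak and norm
closures of this convex set agree. So the unit sphere of `X*` lies in the norm closure of the
span of a countable set, and rescaling gives all of `X*`.
-/

open NormedSpace

/-- The identity from the weak* topology to the weak topology on a dual space. -/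
noncomputable def toWk {X : Type*} [NormedAddCommGroup X] [NormedSpace ℝ X] :
    WeakDual ℝ X → WeakSpace ℝ (StrongDual ℝ X) :=
  fun ψ => StrongDual.toWeakDual.symm ψ

open TopologicalSpace Metric

namespace WeakDual

theorem exists_countable_dense_subset_of_isCompact {𝕜 E : Type*} [NontriviallyNormedField 𝕜]
    [SeminormedAddCommGroup E] [NormedSpace 𝕜 E] [SeparableSpace E]
    {K : Set (WeakDual 𝕜 E)} (hK : IsCompact K) :
    ∃ D ⊆ K, D.Countable ∧ K ⊆ closure D := by
  have : CompactSpace K := isCompact_iff_compactSpace.mp hK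
  have := metrizable_of_isCompact 𝕜 E K hK
  obtain ⟨s, hs, hsK⟩ := exists_countable_dense K
  exact ⟨(↑) '' s, Subtype.coe_image_subset K s, hs.image _, Subtype.dense_iff.mp hsK⟩

theorem isCompact_image_toWeakDual_closedBall {𝕜 E : Type*} [NontriviallyNormedField 𝕜]
    [ProperSpace 𝕜] [SeminormedAddCommGroup E] [NormedSpace 𝕜 E]
    (x : StrongDual 𝕜 E) (r : ℝ) :
    IsCompact (StrongDual.toWeakDual '' closedBall x r) := by
  rw [LinearEquiv.image_eq_preimage_symm]
  exact isCompact_closedBall x r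

end WeakDual

theorem mem_closure_of_continuousWithinAt_toWk {X : Type*} [NormedAddCommGroup X]
    [NormedSpace ℝ X] {K D : Set (WeakDual ℝ X)} {C : Set (StrongDual ℝ X)} {ψ : WeakDual ℝ X}
    (hC : Convex ℝ C) (hDC : WeakDual.toStrongDual '' D ⊆ C) (hDK : D ⊆ K)
    (hψ : ψ ∈ closure D) (hcont : ContinuousWithinAt toWk K ψ) :
    WeakDual.toStrongDual ψ ∈ closure C := by
  have hweak : toWk ψ ∈ closure (toWeakSpace ℝ _ '' C) :=
    closure_mono (Set.image_mono hDC) <| by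
      rw [Set.image_image]
      exact (hcont.mono hDK).mem_closure_image hψ
  -- Mazur: the weak closure of a convex set is its norm closure.
  rw [← hC.toWeakSpace_closure ℝ] at hweak
  obtain ⟨φ, hφ, hφψ⟩ := hweak
  rwa [← (toWeakSpace ℝ _).injective hφψ]

theorem separableSpace_of_isSeparable_sphere {E : Type*} [NormedAddCommGroup E]
    [NormedSpace ℝ E] (h : IsSeparable (sphere (0 : E) 1)) : SeparableSpace E := by
  obtain ⟨S, hS, hsphere⟩ := h
  let M := (Submodule.span ℝ S).topologicalClosure
  have hM : ∀ x, x ∈ M := by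
    intro x
    rcases eq_or_ne x 0 with rfl | hx
    · exact M.zero_mem
    have hxn : ‖x‖ ≠ 0 := norm_ne_zero_iff.mpr hx
    have hunit : ‖x‖⁻¹ • x ∈ M :=
      closure_mono Submodule.subset_span (hsphere (by simp [norm_smul, hxn]))
    simpa [smul_smul, hxn] using M.smul_mem ‖x‖ hunit
  exact isSeparable_univ_iff.mp (hS.isSeparable.span.closure.mono fun x _ => hM x)

theorem stmt19_general {X : Type*} [NormedAddCommGroup X] [NormedSpace ℝ X]
    [TopologicalSpace.SeparableSpace X]
    (hHB : ∀ φ : StrongDual ℝ X, ‖φ‖ = 1 →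
      ContinuousWithinAt toWk
        (StrongDual.toWeakDual '' Metric.closedBall 0 1)
        (StrongDual.toWeakDual φ)) :
    TopologicalSpace.SeparableSpace (StrongDual ℝ X) := by
  obtain ⟨D, hDK, hD, hKD⟩ := WeakDual.exists_countable_dense_subset_of_isCompact
    (WeakDual.isCompact_image_toWeakDual_closedBall (𝕜 := ℝ) (E := X) 0 1)
  have hspan : IsSeparable
      (closure (Submodule.span ℝ (WeakDual.toStrongDual '' D) : Set (StrongDual ℝ X))) :=
    ((hD.image _).isSeparable.span (R := ℝ)).closure
  refine separableSpace_of_isSeparable_sphere (hspan.mono fun φ hφ => ?_)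
  have hφ1 : ‖φ‖ = 1 := mem_sphere_zero_iff_norm.mp hφ
  exact mem_closure_of_continuousWithinAt_toWk (Submodule.span ℝ _).convex Submodule.subset_span
    hDK (hKD ⟨φ, mem_closedBall_zero_iff.mpr hφ1.le, rfl⟩) (hHB φ hφ1)

/-- Let `X` be a Hahn–Banach smooth Banach space, i.e. every norm-one functional in `X*` is
a `w*`-`w` point of continuity of the dual unit ball.  If `X` is separable, then `X*` is
separable. -/
theorem stmt19 {X : Type*} [NormedAddCommGroup X] [NormedSpace ℝ X] [CompleteSpace X]
    [TopologicalSpace.SeparableSpace X]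
    (hHB : ∀ φ : StrongDual ℝ X, ‖φ‖ = 1 →
      ContinuousWithinAt toWk
        (StrongDual.toWeakDual '' Metric.closedBall 0 1)
        (StrongDual.toWeakDual φ)) :
    TopologicalSpace.SeparableSpace (StrongDual ℝ X) :=
  stmt19_general hHB
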